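/- In a restriction category with restriction coproducts and a restriction zero, for a map h : A → A + A the following are equivalent: (i) h is its own decision; (ii) h is a decision of some map; (iii) h has a restriction inverse g : A + A → A such that both composites g ∘ i₁ and g ∘ i₂ with the coproduct injections are restriction idempotents. -/

import Mathlib

open CategoryTheory CategoryTheory.Limits

universe v u

/-- A restriction category: a category with an operation assigning to each
morphism `f : A ⟶ B` a morphism `ρ f : A ⟶ A` satisfying axioms R.1–R.4.
(Composition is written diagrammatically: `f ≫ g` is "first `f`, then `g`",
so the paper's `g ∘ f` is `f ≫ g`.) -/
class RestrictionCategory (C : Type u) [Category.{v} C] where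
  ρ : ∀ {A B : C}, (A ⟶ B) → (A ⟶ A)
  R1 : ∀ {A B : C} (f : A ⟶ B), ρ f ≫ f = f
  R2 : ∀ {A B D : C} (f : A ⟶ B) (g : A ⟶ D), ρ f ≫ ρ g = ρ g ≫ ρ f
  R3 : ∀ {A B D : C} (f : A ⟶ B) (g : A ⟶ D), ρ (ρ f ≫ g) = ρ f ≫ ρ g
  R4 : ∀ {A B D : C} (f : A ⟶ B) (g : B ⟶ D), f ≫ ρ g = ρ (f ≫ g) ≫ f

open RestrictionCategory

open ZeroObject

variable {C : Type u} [Category.{v} C] [RestrictionCategory C]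
  [HasBinaryCoproducts C] [HasZeroObject C] [HasZeroMorphisms C]

/-- The restriction retraction `⟨1|0⟩ : A ⨿ B ⟶ A` of the first injection. -/
noncomputable def iStar (A B : C) : (A ⨿ B) ⟶ A := coprod.desc (𝟙 A) 0

/-- The restriction retraction `⟨0|1⟩ : A ⨿ B ⟶ B` of the second injection. -/
noncomputable def jStar (A B : C) : (A ⨿ B) ⟶ B := coprod.desc 0 (𝟙 B)

/-- `h : A ⟶ A ⨿ A` is a decision for `f : A ⟶ B ⨿ D` if it is restriction
inverse to `⟨overline{i* f} | overline{j* f}⟩ : A ⨿ A ⟶ A` and `ρ h = ρ f`. -/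
def IsDecision {A B D : C} (f : A ⟶ B ⨿ D) (h : A ⟶ A ⨿ A) : Prop :=
  coprod.desc (ρ (f ≫ iStar B D)) (ρ (f ≫ jStar B D)) ≫ h =
    ρ (coprod.desc (ρ (f ≫ iStar B D)) (ρ (f ≫ jStar B D))) ∧
  h ≫ coprod.desc (ρ (f ≫ iStar B D)) (ρ (f ≫ jStar B D)) = ρ h ∧
  ρ h = ρ f

/-!
For (ii) ⇒ (iii) take `g = ⟨ρ (f ≫ i*) | ρ (f ≫ j*)⟩`. For (iii) ⇒ (i) one shows that a restriction
inverse `g` of `h` whose components `e₁ = inl ≫ g`, `e₂ = inr ≫ g` are restriction idempotents must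
be `⟨ρ (h ≫ i*) | ρ (h ≫ j*)⟩`. Since `i*` is a restriction retraction of `inl` (`ρ i* = i* ≫ inl`,
which needs `ρ 0 = 0`), we get `ρ (h ≫ i*) = h ≫ ρ i* ≫ g = h ≫ i* ≫ e₁`, while `e₁ ≫ h = e₁ ≫ inl`.
So the restriction idempotents `ρ (h ≫ i*)` and `e₁` absorb each other, and since restriction
idempotents commute, they are equal.
-/

namespace RestrictionCategory

omit [HasBinaryCoproducts C] [HasZeroObject C] [HasZeroMorphisms C]

lemma rho_id (A : C) : ρ (𝟙 A) = 𝟙 A := by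
  simpa using R1 (𝟙 A)

lemma rho_rho {A B : C} (f : A ⟶ B) : ρ (ρ f) = ρ f := by
  simpa [rho_id] using R3 f (𝟙 A)

lemma rho_comp_comp_rho {A B D : C} (f : A ⟶ B) (g : B ⟶ D) :
    ρ (f ≫ g) ≫ ρ f = ρ (f ≫ g) := by
  rw [← R2, ← R3, ← Category.assoc, R1]

end RestrictionCategory

def IsRestrictionInverse {A B : C} (f : A ⟶ B) (g : B ⟶ A) : Prop :=
  f ≫ g = ρ f ∧ g ≫ f = ρ g

def IsRestrictionIdempotent {A : C} (e : A ⟶ A) : Prop :=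
  ρ e = e

section RestrictionIdempotents

omit [HasBinaryCoproducts C] [HasZeroObject C] [HasZeroMorphisms C]

lemma isRestrictionIdempotent_rho {A B : C} (f : A ⟶ B) : IsRestrictionIdempotent (ρ f) :=
  rho_rho f

lemma IsRestrictionIdempotent.comp_self {A : C} {e : A ⟶ A} (he : IsRestrictionIdempotent e) :
    e ≫ e = e := by
  nth_rw 1 [← he]
  exact R1 e

lemma IsRestrictionIdempotent.eq_of_comp_eq {A : C} {e e' : A ⟶ A}
    (he : IsRestrictionIdempotent e) (he' : IsRestrictionIdempotent e')
    (h₁ : e ≫ e' = e) (h₂ : e' ≫ e = e') : e = e' := calc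
  e = e ≫ e' := h₁.symm
  _ = e' ≫ e := by rw [← he, ← he']; exact R2 e e'
  _ = e' := h₂

lemma rho_comp_eq_of_isRestrictionInverse {A X : C} {h : A ⟶ X} {g : X ⟶ A}
    (hg : IsRestrictionInverse h g) {ι : A ⟶ X} {p : X ⟶ A} (hιp : ι ≫ p = 𝟙 A)
    (hpι : p ≫ ι = ρ p) (he : IsRestrictionIdempotent (ι ≫ g)) :
    ρ (h ≫ p) = ι ≫ g := by
  have hρ : ρ (h ≫ p) = h ≫ p ≫ ι ≫ g := calc
    ρ (h ≫ p) = ρ (h ≫ p) ≫ h ≫ g := by rw [hg.1, rho_comp_comp_rho]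
    _ = h ≫ ρ p ≫ g := by rw [← Category.assoc, ← R4, Category.assoc]
    _ = h ≫ p ≫ ι ≫ g := by rw [← hpι, Category.assoc]
  have hee : ι ≫ g ≫ ι ≫ g = ι ≫ g := by simpa using he.comp_self
  have heh : ι ≫ g ≫ h = ι ≫ g ≫ ι := by
    rw [hg.2, R4, he]
    exact Category.assoc _ _ _
  refine (isRestrictionIdempotent_rho _).eq_of_comp_eq he ?_ ?_
  · simp only [hρ, Category.assoc, hee]
  · simp only [hρ, Category.assoc, reassoc_of% heh, reassoc_of% hιp, hee]

end RestrictionIdempotents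

section Coproducts

omit [HasZeroObject C]

lemma iStar_inl {A B : C} (hzero : ρ (0 : B ⟶ A) = 0) :
    iStar A B ≫ coprod.inl = ρ (iStar A B) := by
  have hl : (coprod.inl : A ⟶ A ⨿ B) ≫ iStar A B = 𝟙 A := coprod.inl_desc _ _
  have hr : (coprod.inr : B ⟶ A ⨿ B) ≫ iStar A B = 0 := coprod.inr_desc _ _
  ext
  · rw [R4, reassoc_of% hl, hl, rho_id, Category.id_comp]
  · rw [R4, reassoc_of% hr, hr, hzero, zero_comp, zero_comp]

lemma jStar_inr {A B : C} (hzero : ρ (0 : A ⟶ B) = 0) :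
    jStar A B ≫ coprod.inr = ρ (jStar A B) := by
  have hl : (coprod.inl : A ⟶ A ⨿ B) ≫ jStar A B = 0 := coprod.inl_desc _ _
  have hr : (coprod.inr : B ⟶ A ⨿ B) ≫ jStar A B = 𝟙 B := coprod.inr_desc _ _
  ext
  · rw [R4, reassoc_of% hl, hl, hzero, zero_comp, zero_comp]
  · rw [R4, reassoc_of% hr, hr, rho_id, Category.id_comp]

lemma IsDecision.exists_isRestrictionInverse {A B D : C} {f : A ⟶ B ⨿ D} {h : A ⟶ A ⨿ A}
    (hd : IsDecision f h) :
    ∃ g : A ⨿ A ⟶ A, IsRestrictionInverse h g ∧ IsRestrictionIdempotent (coprod.inl ≫ g) ∧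
      IsRestrictionIdempotent (coprod.inr ≫ g) :=
  ⟨_, ⟨hd.2.1, hd.1⟩, by rw [coprod.inl_desc]; exact rho_rho _,
    by rw [coprod.inr_desc]; exact rho_rho _⟩

lemma isDecision_self_of_isRestrictionInverse {A : C} (hzero : ρ (0 : A ⟶ A) = 0)
    {h : A ⟶ A ⨿ A} {g : A ⨿ A ⟶ A} (hg : IsRestrictionInverse h g)
    (hl : IsRestrictionIdempotent (coprod.inl ≫ g))
    (hr : IsRestrictionIdempotent (coprod.inr ≫ g)) : IsDecision h h := by
  have hcotuple : coprod.desc (ρ (h ≫ iStar A A)) (ρ (h ≫ jStar A A)) = g := by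
    ext
    · rw [coprod.inl_desc]
      exact rho_comp_eq_of_isRestrictionInverse hg (coprod.inl_desc _ _) (iStar_inl hzero) hl
    · rw [coprod.inr_desc]
      exact rho_comp_eq_of_isRestrictionInverse hg (coprod.inr_desc _ _) (jStar_inr hzero) hr
  exact ⟨by rw [hcotuple, hg.2], by rw [hcotuple, hg.1], rfl⟩

end Coproducts

theorem stmt_11_general
    (hzero : ∀ A : C, ρ (0 : A ⟶ A) = (0 : A ⟶ A))
    {A : C} (h : A ⟶ A ⨿ A) :
    (IsDecision h h ↔ ∃ (B D : C) (f : A ⟶ B ⨿ D), IsDecision f h) ∧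
    ((∃ (B D : C) (f : A ⟶ B ⨿ D), IsDecision f h) ↔
      ∃ g : A ⨿ A ⟶ A, (h ≫ g = ρ h ∧ g ≫ h = ρ g) ∧
        ρ ((coprod.inl : A ⟶ A ⨿ A) ≫ g) = (coprod.inl : A ⟶ A ⨿ A) ≫ g ∧
        ρ ((coprod.inr : A ⟶ A ⨿ A) ≫ g) = (coprod.inr : A ⟶ A ⨿ A) ≫ g) := by
  have ii_to_iii : (∃ (B D : C) (f : A ⟶ B ⨿ D), IsDecision f h) →
      ∃ g : A ⨿ A ⟶ A, IsRestrictionInverse h g ∧ IsRestrictionIdempotent (coprod.inl ≫ g) ∧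
        IsRestrictionIdempotent (coprod.inr ≫ g) :=
    fun ⟨_, _, _, hd⟩ => hd.exists_isRestrictionInverse
  have iii_to_i : (∃ g : A ⨿ A ⟶ A, IsRestrictionInverse h g ∧
      IsRestrictionIdempotent (coprod.inl ≫ g) ∧ IsRestrictionIdempotent (coprod.inr ≫ g)) →
      IsDecision h h :=
    fun ⟨_, hg, hl, hr⟩ => isDecision_self_of_isRestrictionInverse (hzero A) hg hl hr
  exact ⟨⟨fun hd => ⟨A, A, h, hd⟩, fun hd => iii_to_i (ii_to_iii hd)⟩,
    ⟨ii_to_iii, fun hg => ⟨A, A, h, iii_to_i hg⟩⟩⟩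

/-- For `h : A ⟶ A ⨿ A` the following are equivalent: (i) `h` is its own
decision; (ii) `h` is a decision of some map; (iii) `h` has a restriction
inverse `g : A ⨿ A ⟶ A` such that both composites of `g` with the coproduct
injections are restriction idempotents. -/
theorem stmt_11
    (htot : ∀ A B : C, ρ (coprod.inl : A ⟶ A ⨿ B) = 𝟙 A ∧
      ρ (coprod.inr : B ⟶ A ⨿ B) = 𝟙 B)
    (hzero : ∀ A : C, ρ (0 : A ⟶ A) = (0 : A ⟶ A))
    {A : C} (h : A ⟶ A ⨿ A) :
    (IsDecision h h ↔ ∃ (B D : C) (f : A ⟶ B ⨿ D), IsDecision f h) ∧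
    ((∃ (B D : C) (f : A ⟶ B ⨿ D), IsDecision f h) ↔
      ∃ g : A ⨿ A ⟶ A, (h ≫ g = ρ h ∧ g ≫ h = ρ g) ∧
        ρ ((coprod.inl : A ⟶ A ⨿ A) ≫ g) = (coprod.inl : A ⟶ A ⨿ A) ≫ g ∧
        ρ ((coprod.inr : A ⟶ A ⨿ A) ≫ g) = (coprod.inr : A ⟶ A ⨿ A) ≫ g) :=
  stmt_11_general hzero h
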